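/- Let n be a natural number and let C^∞(ℝⁿ) denote the ℝ-algebra of infinitely differentiable functions ℝⁿ → ℝ (the subalgebra of the ℝ-algebra of all functions ℝⁿ → ℝ consisting of the C^∞ functions). Then the map Φ : ℝⁿ → Hom_{ℝ-alg}(C^∞(ℝⁿ), ℝ), sending a point p to the evaluation homomorphism f ↦ f(p), is a bijection; its inverse sends an ℝ-algebra homomorphism φ to the point (φ(x₁),…,φ(xₙ)), where xᵢ denotes the i-th coordinate function. -/
import Mathlib


/-- The ℝ-algebra `C^∞(ℝⁿ)` of infinitely differentiable functions `ℝⁿ → ℝ`, as a subalgebra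
of the ℝ-algebra of all functions `ℝⁿ → ℝ`. -/
def SmoothFunctions (n : ℕ) : Subalgebra ℝ ((Fin n → ℝ) → ℝ) where
  carrier := {f | ContDiff ℝ (⊤ : ℕ∞) f}
  mul_mem' {a b} (hf : ContDiff ℝ (⊤ : ℕ∞) a) (hg : ContDiff ℝ (⊤ : ℕ∞) b) := hf.mul hg
  add_mem' {a b} (hf : ContDiff ℝ (⊤ : ℕ∞) a) (hg : ContDiff ℝ (⊤ : ℕ∞) b) := hf.add hg
  one_mem' := show ContDiff ℝ (⊤ : ℕ∞) (1 : (Fin n → ℝ) → ℝ) from contDiff_const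
  zero_mem' := show ContDiff ℝ (⊤ : ℕ∞) (0 : (Fin n → ℝ) → ℝ) from contDiff_const
  algebraMap_mem' r := show ContDiff ℝ (⊤ : ℕ∞) (algebraMap ℝ ((Fin n → ℝ) → ℝ) r) from contDiff_const

/-- The `i`-th coordinate function `ℝⁿ → ℝ`, as an element of `C^∞(ℝⁿ)`. -/
def coordFun (n : ℕ) (i : Fin n) : SmoothFunctions n :=
  ⟨fun q => q i,
    show ContDiff ℝ (⊤ : ℕ∞) (fun q : Fin n → ℝ => q i) from
      (ContinuousLinearMap.proj (R := ℝ) (φ := fun _ : Fin n => ℝ) i).contDiff⟩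

lemma key (n : ℕ) (φ : SmoothFunctions n →ₐ[ℝ] ℝ) (f : SmoothFunctions n) :
    φ f = (f : (Fin n → ℝ) → ℝ) (fun i => φ (coordFun n i)) := by
  set p : Fin n → ℝ := fun i => φ (coordFun n i) with hp
  by_contra h
  set k : SmoothFunctions n :=
    (f - algebraMap ℝ _ (φ f))^2
      + ∑ i, (coordFun n i - algebraMap ℝ _ (p i))^2 with hk
  have hφk : φ k = 0 := by
    simp [hk, map_sum, map_pow, map_sub, AlgHom.commutes, hp]
  have hkval : ∀ q, (k : (Fin n → ℝ) → ℝ) q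
      = ((f : (Fin n → ℝ) → ℝ) q - φ f)^2 + ∑ i, (q i - p i)^2 := by
    intro q
    simp only [hk]
    push_cast
    simp [coordFun, Pi.algebraMap_apply]
  have hkne : ∀ q, (k : (Fin n → ℝ) → ℝ) q ≠ 0 := by
    intro q hq
    rw [hkval] at hq
    have h1 : ((f : (Fin n → ℝ) → ℝ) q - φ f)^2 = 0 ∧ ∑ i, (q i - p i)^2 = 0 := by
      constructor
      · nlinarith [sq_nonneg ((f : (Fin n → ℝ) → ℝ) q - φ f),
          Finset.sum_nonneg (fun i (_ : i ∈ Finset.univ) => sq_nonneg (q i - p i))]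
      · nlinarith [sq_nonneg ((f : (Fin n → ℝ) → ℝ) q - φ f),
          Finset.sum_nonneg (fun i (_ : i ∈ Finset.univ) => sq_nonneg (q i - p i))]
    have hq_eq : q = p := by
      funext i
      have := (Finset.sum_eq_zero_iff_of_nonneg
        (fun i _ => sq_nonneg (q i - p i))).1 h1.2 i (Finset.mem_univ i)
      have := pow_eq_zero_iff (n := 2) (by norm_num) |>.1 this
      linarith
    have : (f : (Fin n → ℝ) → ℝ) q - φ f = 0 :=
      pow_eq_zero_iff (n := 2) (by norm_num) |>.1 h1.1
    apply h
    rw [← hq_eq]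
    linarith
  have hksm : ContDiff ℝ (⊤ : ℕ∞) (k : (Fin n → ℝ) → ℝ) := k.2
  set kinv : SmoothFunctions n := ⟨fun q => ((k : (Fin n → ℝ) → ℝ) q)⁻¹,
    show ContDiff ℝ (⊤ : ℕ∞) _ from hksm.inv hkne⟩ with hkinv
  have hmul : k * kinv = 1 := by
    ext q
    push_cast
    simp [hkinv, mul_inv_cancel₀ (hkne q)]
  have : (0 : ℝ) = 1 := by
    have := congrArg φ hmul
    rw [map_mul, hφk, map_one, zero_mul] at this
    exact this
  norm_num at this

/-- The map `Φ : ℝⁿ → Hom_{ℝ-alg}(C^∞(ℝⁿ), ℝ)` sending a point `p` to the evaluation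
homomorphism `f ↦ f(p)` is a bijection; its inverse sends an ℝ-algebra homomorphism `φ`
to the point `(φ(x₁),…,φ(xₙ))`, where `xᵢ` is the `i`-th coordinate function. -/
theorem stmt_6 (n : ℕ) :
    let Φ : (Fin n → ℝ) → (SmoothFunctions n →ₐ[ℝ] ℝ) :=
      fun p => (Pi.evalAlgHom ℝ (fun _ : Fin n → ℝ => ℝ) p).comp (SmoothFunctions n).val
    Function.Bijective Φ ∧
    ∀ φ : SmoothFunctions n →ₐ[ℝ] ℝ, Φ (fun i => φ (coordFun n i)) = φ := by
  intro Φ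
  have hΦcoord : ∀ p i, Φ p (coordFun n i) = p i := fun p i => rfl
  have hinv : ∀ φ : SmoothFunctions n →ₐ[ℝ] ℝ, Φ (fun i => φ (coordFun n i)) = φ := by
    intro φ
    apply AlgHom.ext
    intro f
    exact (key n φ f).symm
  refine ⟨⟨fun p q hpq => ?_, fun φ => ⟨fun i => φ (coordFun n i), hinv φ⟩⟩, hinv⟩
  funext i
  rw [← hΦcoord p i, ← hΦcoord q i, hpq]
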